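/- arXiv:1311.5321 — 2 statements merged into one kernel-verified Lean document; each statement's English description precedes it below -/
import Mathlib

section
/- Fix integers n > r ≥ 0. (i) If u₁, u₂ ∈ U_r, p₁, p₂ ∈ P'_{n−r}, q₁, q₂ ∈ Q'_{n−r}, and ū₁, ū₂ ∈ Ū_{r,n−r} satisfy R_r u₁ p₁ q₁ ū₁ = R_r u₂ p₂ q₂ ū₂ (equality of right cosets in GL_n(ℝ)), then u₁ = u₂, q₁ = q₂, ū₁ = ū₂, and p₂ p₁^{-1} ∈ N'_{n−r}. (ii) The complement in GL_n(ℝ) of the product set R_r · U_r · P'_{n−r} · Q'_{n−r} · Ū_{r,n−r} is a null set for Haar measure on GL_n(ℝ). -/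
open Matrix MeasureTheory

/-- Borel σ-algebra on `GL_n(ℝ)` (with its topology as a matrix group). -/
noncomputable instance (n : ℕ) : MeasurableSpace (GL (Fin n) ℝ) := borel _

/-- The Rankin–Selberg subgroup `R_r ⊆ GL_n(ℝ)`: block matrices `[g, u; 0, h]` with
`g ∈ GL_r(ℝ)`, `h ∈ N_{n-r}(ℝ)` upper-triangular unipotent, and `u` an `r × (n-r)` matrix
whose first column (the column of index `r`) is zero. -/
def RSgroup (n r : ℕ) : Set (GL (Fin n) ℝ) :=
  {g | (∀ i j : Fin n, r ≤ (i : ℕ) → (j : ℕ) < (i : ℕ) →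
          (g : Matrix (Fin n) (Fin n) ℝ) i j = 0) ∧
       (∀ i : Fin n, r ≤ (i : ℕ) → (g : Matrix (Fin n) (Fin n) ℝ) i i = 1) ∧
       (∀ i j : Fin n, (i : ℕ) < r → (j : ℕ) = r → (g : Matrix (Fin n) (Fin n) ℝ) i j = 0)}

/-- The subgroup `U_r ⊆ GL_n(ℝ)` of block matrices `[1_r, u; 0, 1_{n-r}]` where all columns
of `u` except possibly the first one (the column of index `r`) vanish. -/
def Ugroup (n r : ℕ) : Set (GL (Fin n) ℝ) :=
  {g | (∀ i : Fin n, (g : Matrix (Fin n) (Fin n) ℝ) i i = 1) ∧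
       (∀ i j : Fin n, i ≠ j → ¬((i : ℕ) < r ∧ (j : ℕ) = r) →
          (g : Matrix (Fin n) (Fin n) ℝ) i j = 0)}

/-- The image `P'_{n-r}` of `P_{n-r} = [1, *; 0, *] ⊆ GL_{n-r}(ℝ)` in `GL_n(ℝ)` under the
embedding `g ↦ diag(1_r, g)`. -/
def Pgroup' (n r : ℕ) : Set (GL (Fin n) ℝ) :=
  {g | (∀ i j : Fin n, ((i : ℕ) < r ∨ (j : ℕ) < r) →
          (g : Matrix (Fin n) (Fin n) ℝ) i j = if i = j then 1 else 0) ∧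
       (∀ i j : Fin n, (j : ℕ) = r →
          (g : Matrix (Fin n) (Fin n) ℝ) i j = if (i : ℕ) = r then 1 else 0)}

/-- The image `Q'_{n-r}` of `Q_{n-r} = [*, 0; *, 1_{n-r-1}] ⊆ GL_{n-r}(ℝ)` in `GL_n(ℝ)`
under the embedding `g ↦ diag(1_r, g)`. -/
def Qgroup' (n r : ℕ) : Set (GL (Fin n) ℝ) :=
  {g | (∀ i j : Fin n, ((i : ℕ) < r ∨ (j : ℕ) < r) →
          (g : Matrix (Fin n) (Fin n) ℝ) i j = if i = j then 1 else 0) ∧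
       (∀ i j : Fin n, r + 1 ≤ (j : ℕ) →
          (g : Matrix (Fin n) (Fin n) ℝ) i j = if i = j then 1 else 0)}

/-- The image `N'_{n-r}` of `N_{n-r}(ℝ)` in `GL_n(ℝ)` under `g ↦ diag(1_r, g)`. -/
def Ngroup' (n r : ℕ) : Set (GL (Fin n) ℝ) :=
  {g | (∀ i : Fin n, (g : Matrix (Fin n) (Fin n) ℝ) i i = 1) ∧
       (∀ i j : Fin n, i ≠ j → ¬(r ≤ (i : ℕ) ∧ (i : ℕ) < (j : ℕ)) →
          (g : Matrix (Fin n) (Fin n) ℝ) i j = 0)}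

/-- `Ū_{r,n-r} ⊆ GL_n(ℝ)`: block lower-triangular matrices `[1_r, 0; x, 1_{n-r}]`. -/
def Ubar (n r : ℕ) : Set (GL (Fin n) ℝ) :=
  {g | (∀ i : Fin n, (g : Matrix (Fin n) (Fin n) ℝ) i i = 1) ∧
       (∀ i j : Fin n, i ≠ j → ¬(r ≤ (i : ℕ) ∧ (j : ℕ) < r) →
          (g : Matrix (Fin n) (Fin n) ℝ) i j = 0)}

/-!
Let `P` be the diagonal projection onto the coordinates `≥ r` and `E` the one onto the
coordinate `r`. Each of the groups `U_r`, `Ū_{r,n-r}`, `P'`, `Q'` is the solution set of two or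
three identities such as `P x = P` or `x (1 - E) = 1 - E`, and every `ρ ∈ R_r` satisfies
`P ρ P = P ρ` and `ρ E = E`.

(i) Left multiplication by `P` removes the `U_r`-factors from `u₁ k₁ v₁ = ρ u₂ k₂ v₂`
(`kᵢ = pᵢ qᵢ` is block diagonal); right multiplication by `P` then separates the `Ū`-factors,
giving `v₁ = v₂` and `k₁ = w k₂` with `w = 1 - P + P ρ P ∈ N'`. A matrix fixing both `E` and
`1 - E` is the identity; applied to `q₁ q₂⁻¹ = p₁⁻¹ w p₂` and to `u₁ u₂⁻¹` (using
`ρ = u₁ w u₂⁻¹`) this gives `q₁ = q₂` and `u₁ = u₂`.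

(ii) If the lower-right minors of `g` of sizes `n - r` and `n - r - 1` do not vanish, the factors
are explicit: `k = 1 - P + P g P` is invertible, a Schur complement step writes `g = R k v` with
`P R = P`, moving the column `r` of `R` into `u` splits `R = ρ u`, and `k = p q` where `p` is `k`
with its column `r` replaced by `e_r`. Along lines in the direction `P C⁻¹` such a minor of `B C`
is a characteristic polynomial, so its zero set meets each right translate in a Lebesgue-null set;
a Fubini argument over `volume × μ` turns this into `μ`-nullity in `GL_n(ℝ)`.
-/

namespace RSCoset

section Algebra

variable {A : Type*}

lemma eq_one_of_mul_eq_of_mul_one_sub_eq [Ring A] {x e : A} (h₁ : x * e = e)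
    (h₂ : x * (1 - e) = 1 - e) : x = 1 := by
  calc x = x * e + x * (1 - e) := by rw [← mul_add, add_sub_cancel, mul_one]
    _ = 1 := by rw [h₁, h₂, add_sub_cancel]

lemma inv_mul_eq_self_of_mul_eq_self [Monoid A] {u : Aˣ} {x : A} (h : ↑u * x = x) :
    ↑u⁻¹ * x = x :=
  (Units.inv_mul_eq_iff_eq_mul u).mpr h.symm

lemma mul_inv_eq_self_of_mul_eq_self [Monoid A] {u : Aˣ} {x : A} (h : x * ↑u = x) :
    x * ↑u⁻¹ = x :=
  (Units.mul_inv_eq_iff_eq_mul u).mpr h.symm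

lemma exists_val_eq_one_add_of_mul_self_eq_zero [Ring A] {z : A} (hz : z * z = 0) :
    ∃ u : Aˣ, (u : A) = 1 + z :=
  ⟨(IsNilpotent.isUnit_one_add ⟨2, by rw [pow_two, hz]⟩).unit, rfl⟩

end Algebra

lemma _root_.Matrix.IsUpperTriangular.mul_apply_self {m R : Type*} [Fintype m] [LinearOrder m]
    [NonUnitalNonAssocSemiring R] {M N : Matrix m m R} (hM : M.IsUpperTriangular) (hN : N.IsUpperTriangular)
    (i : m) : (M * N) i i = M i i * N i i := by
  rw [mul_apply, Finset.sum_eq_single i (fun k _ hk => ?_) (by simp)]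
  rcases lt_or_gt_of_ne hk with h | h
  · rw [hM h, zero_mul]
  · rw [hN h, mul_zero]

/-! ### Diagonal projections -/

section DiagInd

variable {ι R : Type*} [DecidableEq ι] [Ring R]

def diagInd (p : ι → Prop) [DecidablePred p] : Matrix ι ι R :=
  diagonal fun i => if p i then 1 else 0

variable (p q : ι → Prop) [DecidablePred p] [DecidablePred q]

lemma one_sub_diagInd : (1 - diagInd p : Matrix ι ι R) = diagInd fun i => ¬p i := by
  ext i j
  by_cases hp : p i <;> rcases eq_or_ne i j with rfl | h <;> simp [diagInd, *, one_apply]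

variable {p q} in
lemma diagInd_congr (h : ∀ i, p i ↔ q i) : (diagInd p : Matrix ι ι R) = diagInd q := by
  simp [diagInd, h]

variable [Fintype ι]

@[simp]
lemma diagInd_mul_apply (M : Matrix ι ι R) (i j : ι) :
    (diagInd p * M : Matrix ι ι R) i j = if p i then M i j else 0 := by
  simp [diagInd, diagonal_mul]

@[simp]
lemma mul_diagInd_apply (M : Matrix ι ι R) (i j : ι) :
    (M * diagInd p : Matrix ι ι R) i j = if p j then M i j else 0 := by
  simp [diagInd, mul_diagonal]

lemma diagInd_mul_diagInd :
    (diagInd p * diagInd q : Matrix ι ι R) = diagInd fun i => p i ∧ q i := by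
  rw [diagInd, diagInd, diagonal_mul_diagonal, diagInd]
  congr 1
  ext i
  by_cases hp : p i <;> by_cases hq : q i <;> simp [*]

lemma mul_diagInd_eq_iff {M : Matrix ι ι R} :
    M * diagInd p = diagInd p ↔ ∀ i j, p j → M i j = (1 : Matrix ι ι R) i j := by
  simp only [← Matrix.ext_iff, mul_diagInd_apply]
  refine forall₂_congr fun i j => ?_
  by_cases hp : p j <;> rcases eq_or_ne i j with rfl | h <;> simp [diagInd, one_apply, *]

lemma diagInd_mul_eq_iff {M : Matrix ι ι R} :
    diagInd p * M = diagInd p ↔ ∀ i j, p i → M i j = (1 : Matrix ι ι R) i j := by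
  simp only [← Matrix.ext_iff, diagInd_mul_apply]
  refine forall₂_congr fun i j => ?_
  by_cases hp : p i <;> rcases eq_or_ne i j with rfl | h <;> simp [diagInd, one_apply, *]

end DiagInd

section Projections

variable {n : ℕ} {R : Type*} [CommRing R]

local notation "Mat[" R "]" => Matrix (Fin n) (Fin n) R

def lowerProj (r : ℕ) : Mat[R] := diagInd fun i => r ≤ (i : ℕ)

def pivotProj (r : ℕ) : Mat[R] := diagInd fun i => (i : ℕ) = r

lemma one_sub_lowerProj (r : ℕ) :
    (1 - lowerProj r : Mat[R]) = diagInd fun i : Fin n => (i : ℕ) < r := by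
  rw [lowerProj, one_sub_diagInd]
  exact diagInd_congr fun i => not_le

lemma one_sub_pivotProj (r : ℕ) :
    (1 - pivotProj r : Mat[R]) = diagInd fun i : Fin n => (i : ℕ) ≠ r := by
  rw [pivotProj, one_sub_diagInd]

variable {r : ℕ}

@[simp]
lemma lowerProj_mul_lowerProj : (lowerProj r * lowerProj r : Mat[R]) = lowerProj r := by
  rw [lowerProj, diagInd_mul_diagInd]
  exact diagInd_congr fun i => and_self_iff

@[simp]
lemma pivotProj_mul_pivotProj : (pivotProj r * pivotProj r : Mat[R]) = pivotProj r := by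
  rw [pivotProj, diagInd_mul_diagInd]
  exact diagInd_congr fun i => and_self_iff

@[simp]
lemma lowerProj_mul_pivotProj : (lowerProj r * pivotProj r : Mat[R]) = pivotProj r := by
  rw [lowerProj, pivotProj, diagInd_mul_diagInd]
  exact diagInd_congr fun i => by omega

@[simp]
lemma pivotProj_mul_lowerProj : (pivotProj r * lowerProj r : Mat[R]) = pivotProj r := by
  rw [lowerProj, pivotProj, diagInd_mul_diagInd]
  exact diagInd_congr fun i => by omega

def IsBlockDiag (r : ℕ) (k : Mat[R]) : Prop :=
  (1 - lowerProj r) * k = 1 - lowerProj r ∧ k * (1 - lowerProj r) = 1 - lowerProj r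

lemma IsBlockDiag.lowerProj_mul_comm {k : Mat[R]} (hk : IsBlockDiag r k) :
    lowerProj r * k = k * lowerProj r := by
  calc lowerProj r * k = k - (1 - lowerProj r) * k := by rw [sub_mul, one_mul, sub_sub_cancel]
    _ = k - k * (1 - lowerProj r) := by rw [hk.1, hk.2]
    _ = k * lowerProj r := by rw [mul_sub, mul_one, sub_sub_cancel]

lemma IsBlockDiag.apply_eq {k : Mat[R]} (hk : IsBlockDiag r k) {i j : Fin n}
    (h : (i : ℕ) < r ∨ (j : ℕ) < r) : k i j = (1 : Mat[R]) i j := by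
  have hrow := hk.1
  have hcol := hk.2
  rw [one_sub_lowerProj, diagInd_mul_eq_iff] at hrow
  rw [one_sub_lowerProj, mul_diagInd_eq_iff] at hcol
  exact h.elim (hrow i j) (hcol i j)

def lowerBlock (r : ℕ) (g : Mat[R]) : Mat[R] :=
  1 - lowerProj r + lowerProj r * g * lowerProj r

lemma lowerBlock_apply (g : Mat[R]) (i j : Fin n) :
    lowerBlock r g i j =
      if r ≤ (i : ℕ) ∧ r ≤ (j : ℕ) then g i j else (1 : Mat[R]) i j := by
  rw [lowerBlock, one_sub_lowerProj, Matrix.add_apply, lowerProj, mul_diagInd_apply,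
    diagInd_mul_apply]
  simp only [diagInd, diagonal_apply, one_apply]
  split_ifs <;> subst_vars <;> first | omega | simp

lemma isBlockDiag_lowerBlock (g : Mat[R]) : IsBlockDiag r (lowerBlock r g) := by
  rw [IsBlockDiag, one_sub_lowerProj, diagInd_mul_eq_iff, mul_diagInd_eq_iff]
  constructor <;> intro i j h <;> rw [lowerBlock_apply, if_neg (by omega)]

lemma lowerProj_mul_lowerBlock (g : Mat[R]) :
    lowerProj r * lowerBlock r g = lowerProj r * g * lowerProj r := by
  rw [lowerBlock, mul_add, mul_sub, mul_one, lowerProj_mul_lowerProj, sub_self, zero_add,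
    ← mul_assoc, ← mul_assoc, lowerProj_mul_lowerProj]

def lowerMinor (s : ℕ) (A : Mat[R]) : R :=
  (A.toSquareBlockProp fun i => s ≤ (i : ℕ)).det

lemma lowerMinor_congr {s : ℕ} {A B : Mat[R]}
    (h : ∀ i j : Fin n, s ≤ (i : ℕ) → s ≤ (j : ℕ) → A i j = B i j) :
    lowerMinor s A = lowerMinor s B := by
  unfold lowerMinor
  congr 1
  ext i j
  exact h i j i.2 j.2

lemma det_eq_lowerMinor {s : ℕ} {A : Mat[R]}
    (h : ∀ i j : Fin n, (j : ℕ) < s → A i j = (1 : Mat[R]) i j) :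
    A.det = lowerMinor s A := by
  have hid : A.toSquareBlockProp (fun i : Fin n => ¬s ≤ (i : ℕ)) = 1 := by
    ext i j
    simp [toSquareBlockProp_def, h i j (by have := j.2; omega), one_apply, Subtype.ext_iff]
  rw [twoBlockTriangular_det' A (fun i : Fin n => s ≤ (i : ℕ)), hid, det_one, mul_one,
    lowerMinor]
  intro i hi j hj
  rw [h i j (by omega), one_apply_ne (by rintro rfl; omega)]

lemma det_lowerBlock (g : Mat[R]) : (lowerBlock r g).det = lowerMinor r g := by
  rw [det_eq_lowerMinor (s := r) fun i j hj => by rw [lowerBlock_apply, if_neg (by omega)]]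
  exact lowerMinor_congr fun i j hi hj => by rw [lowerBlock_apply, if_pos ⟨hi, hj⟩]

lemma lowerMinor_lowerBlock {s : ℕ} (h : r ≤ s) (g : Mat[R]) :
    lowerMinor s (lowerBlock r g) = lowerMinor s g :=
  lowerMinor_congr fun i j hi hj => by rw [lowerBlock_apply, if_pos ⟨by omega, by omega⟩]

lemma mul_one_sub_pivotProj_add_pivotProj_apply (k : Mat[R]) (i j : Fin n) :
    (k * (1 - pivotProj r) + pivotProj r : Mat[R]) i j =
      if (j : ℕ) = r then (1 : Mat[R]) i j else k i j := by
  rw [Matrix.add_apply, one_sub_pivotProj, mul_diagInd_apply, pivotProj]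
  simp only [diagInd, diagonal_apply, one_apply]
  split_ifs <;> subst_vars <;> simp_all

lemma det_mul_one_sub_pivotProj_add_pivotProj {k : Mat[R]} (hk : IsBlockDiag r k) :
    (k * (1 - pivotProj r) + pivotProj r).det = lowerMinor (r + 1) k := by
  rw [det_eq_lowerMinor (s := r + 1) fun i j hj => ?_]
  · exact lowerMinor_congr fun i j _ hj => by
      rw [mul_one_sub_pivotProj_add_pivotProj_apply, if_neg (by omega)]
  rw [mul_one_sub_pivotProj_add_pivotProj_apply]
  split_ifs with h
  · rfl
  · exact hk.apply_eq (Or.inr (by omega))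

lemma finite_setOf_lowerMinor_add_smul_eq_zero [IsDomain R] (s : ℕ) (M : Mat[R]) :
    {t : R | lowerMinor s (M + t • lowerProj s) = 0}.Finite := by
  set N := M.toSquareBlockProp fun i : Fin n => s ≤ (i : ℕ)
  -- on the block `s ≤ i`, adding `t • lowerProj s` adds the scalar `t`
  have h : ∀ t : R, lowerMinor s (M + t • lowerProj s) = (-N).charpoly.eval t := by
    intro t
    rw [eval_charpoly, sub_neg_eq_add, add_comm, lowerMinor]
    congr 1
    ext i j
    simp [N, toSquareBlockProp_def, lowerProj, diagInd, diagonal_apply, Subtype.ext_iff, i.2]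
  refine (Polynomial.finite_setOfPred_isRoot (charpoly_monic (-N)).ne_zero).subset fun t ht => ?_
  rwa [Set.mem_ofPred_eq, h] at ht

end Projections

variable {n r : ℕ}

local notation "Mat" => Matrix (Fin n) (Fin n) ℝ

/-! ### The subgroups as solution sets of projection identities -/

lemma mem_Ugroup_iff {u : GL (Fin n) ℝ} :
    u ∈ Ugroup n r ↔ lowerProj r * (u : Mat) = lowerProj r ∧
      (u : Mat) * (1 - pivotProj r) = 1 - pivotProj r := by
  simp only [Ugroup, Set.mem_ofPred_eq, lowerProj, one_sub_pivotProj, diagInd_mul_eq_iff,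
    mul_diagInd_eq_iff, one_apply, Fin.ext_iff]
  grind

lemma mem_Ubar_iff {v : GL (Fin n) ℝ} :
    v ∈ Ubar n r ↔ (1 - lowerProj r) * (v : Mat) = 1 - lowerProj r ∧
      (v : Mat) * lowerProj r = lowerProj r := by
  rw [one_sub_lowerProj, lowerProj]
  simp only [Ubar, Set.mem_ofPred_eq, diagInd_mul_eq_iff, mul_diagInd_eq_iff, one_apply,
    Fin.ext_iff]
  grind

lemma mem_Pgroup'_iff {p : GL (Fin n) ℝ} :
    p ∈ Pgroup' n r ↔ (1 - lowerProj r) * (p : Mat) = 1 - lowerProj r ∧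
      (p : Mat) * (1 - lowerProj r) = 1 - lowerProj r ∧ (p : Mat) * pivotProj r = pivotProj r := by
  simp only [Pgroup', Set.mem_ofPred_eq, pivotProj, one_sub_lowerProj, diagInd_mul_eq_iff,
    mul_diagInd_eq_iff, one_apply, Fin.ext_iff]
  grind

lemma mem_Qgroup'_iff {q : GL (Fin n) ℝ} :
    q ∈ Qgroup' n r ↔ (1 - lowerProj r) * (q : Mat) = 1 - lowerProj r ∧
      (q : Mat) * (1 - pivotProj r) = 1 - pivotProj r := by
  simp only [Qgroup', Set.mem_ofPred_eq, one_sub_pivotProj, one_sub_lowerProj,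
    diagInd_mul_eq_iff, mul_diagInd_eq_iff, one_apply, Fin.ext_iff]
  grind

lemma inv_mem_Ugroup {u : GL (Fin n) ℝ} (hu : u ∈ Ugroup n r) : u⁻¹ ∈ Ugroup n r := by
  obtain ⟨h₁, h₂⟩ := mem_Ugroup_iff.mp hu
  exact mem_Ugroup_iff.mpr ⟨mul_inv_eq_self_of_mul_eq_self h₁, inv_mul_eq_self_of_mul_eq_self h₂⟩

lemma isBlockDiag_mul_of_mem {p q : GL (Fin n) ℝ} (hp : p ∈ Pgroup' n r)
    (hq : q ∈ Qgroup' n r) : IsBlockDiag r ((p * q : GL (Fin n) ℝ) : Mat) := by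
  obtain ⟨hp₁, hp₂, -⟩ := mem_Pgroup'_iff.mp hp
  obtain ⟨hq₁, hq₂⟩ := mem_Qgroup'_iff.mp hq
  have hq₃ : (q : Mat) * (1 - lowerProj r) = 1 - lowerProj r := by
    have h : (1 - pivotProj r) * (1 - lowerProj r : Mat) = 1 - lowerProj r := by
      simp only [mul_sub, sub_mul, one_mul, mul_one, pivotProj_mul_lowerProj,
        sub_sub_sub_cancel_right]
    rw [← h, ← mul_assoc, hq₂]
  constructor
  · rw [Units.val_mul, ← mul_assoc, hp₁, hq₁]
  · rw [Units.val_mul, mul_assoc, hq₃, hp₂]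

lemma lowerProj_mul_mul_lowerProj_of_mem_RSgroup {ρ : GL (Fin n) ℝ} (hρ : ρ ∈ RSgroup n r) :
    lowerProj r * (ρ : Mat) * lowerProj r = lowerProj r * (ρ : Mat) := by
  ext i j
  simp only [lowerProj, diagInd_mul_apply, mul_diagInd_apply]
  split_ifs <;> first | rfl | exact (hρ.1 i j (by assumption) (by omega)).symm

lemma mul_pivotProj_of_mem_RSgroup {ρ : GL (Fin n) ℝ} (hρ : ρ ∈ RSgroup n r) :
    (ρ : Mat) * pivotProj r = pivotProj r := by
  rw [pivotProj, mul_diagInd_eq_iff]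
  intro i j hj
  obtain ⟨hlow, hdiag, hcol⟩ := hρ
  rcases lt_trichotomy (i : ℕ) r with hi | hi | hi
  · simp [hcol i j hi hj, one_apply, Fin.ext_iff]; omega
  · rw [show i = j from Fin.ext (by omega), hdiag j (by omega), one_apply_eq]
  · simp [hlow i j (by omega) (by omega), one_apply, Fin.ext_iff]; omega

lemma mem_RSgroup_of {ρ : GL (Fin n) ℝ} (hP : lowerProj r * (ρ : Mat) = lowerProj r)
    (hE : (ρ : Mat) * pivotProj r = pivotProj r) : ρ ∈ RSgroup n r := by
  rw [lowerProj, diagInd_mul_eq_iff] at hP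
  rw [pivotProj, mul_diagInd_eq_iff] at hE
  refine ⟨fun i j hi hji => ?_, fun i hi => ?_, fun i j hi hj => ?_⟩
  · simp [hP i j hi, one_apply, Fin.ext_iff]; omega
  · simp [hP i i hi]
  · simp [hE i j hj, one_apply, Fin.ext_iff]; omega

lemma mem_Ngroup'_iff {w : GL (Fin n) ℝ} :
    w ∈ Ngroup' n r ↔ (w : Mat).IsUpperTriangular ∧ (∀ i, (w : Mat) i i = 1) ∧
      (1 - lowerProj r) * (w : Mat) = 1 - lowerProj r := by
  simp only [Ngroup', Set.mem_ofPred_eq, IsUpperTriangular, BlockTriangular, id,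
    one_sub_lowerProj, diagInd_mul_eq_iff, one_apply, Fin.lt_def, Fin.ext_iff]
  grind

lemma mul_eq_of_mem_Ngroup' {w : GL (Fin n) ℝ} (hw : w ∈ Ngroup' n r) :
    (w : Mat) * (1 - lowerProj r) = 1 - lowerProj r ∧ (w : Mat) * pivotProj r = pivotProj r := by
  rw [one_sub_lowerProj, pivotProj, mul_diagInd_eq_iff, mul_diagInd_eq_iff]
  obtain ⟨hdiag, hoff⟩ := hw
  constructor <;> intro i j hj <;> rcases eq_or_ne i j with rfl | hij
  all_goals first
    | simp [hdiag]
    | simp [hoff i j hij (by omega), one_apply_ne hij]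

lemma inv_mem_Ngroup' {w : GL (Fin n) ℝ} (hw : w ∈ Ngroup' n r) : w⁻¹ ∈ Ngroup' n r := by
  obtain ⟨htri, hdiag, hrows⟩ := mem_Ngroup'_iff.mp hw
  have htri' : (↑w⁻¹ : Mat).IsUpperTriangular := by
    rw [coe_units_inv]
    exact blockTriangular_inv_of_blockTriangular htri
  refine mem_Ngroup'_iff.mpr ⟨htri', fun i => ?_, (Units.mul_inv_eq_iff_eq_mul w).mpr hrows.symm⟩
  have h : (((w⁻¹ : GL (Fin n) ℝ) : Mat) * w) i i = 1 := by
    rw [← Units.val_mul, inv_mul_cancel, Units.val_one, one_apply_eq]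
  rwa [Matrix.IsUpperTriangular.mul_apply_self htri' htri, hdiag, mul_one] at h

lemma mem_Ngroup'_of_mem_RSgroup {ρ w : GL (Fin n) ℝ} (hρ : ρ ∈ RSgroup n r)
    (hw : (w : Mat) = lowerBlock r ρ) : w ∈ Ngroup' n r := by
  refine ⟨fun i => ?_, fun i j hij hij' => ?_⟩ <;> rw [hw, lowerBlock_apply] <;> split_ifs with h
  · exact hρ.2.1 i h.1
  · exact one_apply_eq i
  · exact hρ.1 i j h.1 (by have := Fin.val_ne_of_ne hij; omega)
  · exact one_apply_ne hij

/-! ### Uniqueness -/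

lemma lowerProj_mul_mul_mul_of_mem_Ugroup {u k v : GL (Fin n) ℝ} (hu : u ∈ Ugroup n r)
    (hk : IsBlockDiag r (k : Mat)) :
    lowerProj r * ((u * k * v : GL (Fin n) ℝ) : Mat) = (k : Mat) * lowerProj r * (v : Mat) := by
  rw [Units.val_mul, Units.val_mul, ← mul_assoc, ← mul_assoc, (mem_Ugroup_iff.mp hu).1,
    hk.lowerProj_mul_comm]

lemma Ubar_eq_and_eq_lowerBlock_mul {ρ u₁ u₂ k₁ k₂ v₁ v₂ : GL (Fin n) ℝ}
    (hρ : ρ ∈ RSgroup n r) (hu₁ : u₁ ∈ Ugroup n r) (hu₂ : u₂ ∈ Ugroup n r)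
    (hk₁ : IsBlockDiag r (k₁ : Mat)) (hk₂ : IsBlockDiag r (k₂ : Mat)) (hv₁ : v₁ ∈ Ubar n r)
    (hv₂ : v₂ ∈ Ubar n r) (h : u₁ * k₁ * v₁ = ρ * (u₂ * k₂ * v₂)) :
    v₁ = v₂ ∧ (k₁ : Mat) = lowerBlock r ρ * (k₂ : Mat) := by
  set P : Mat := lowerProj r
  have hPP : P * P = P := lowerProj_mul_lowerProj
  have hk₂c : P * k₂ = k₂ * P := hk₂.lowerProj_mul_comm
  obtain ⟨hv₁', hv₁P⟩ := mem_Ubar_iff.mp hv₁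
  obtain ⟨hv₂', hv₂P⟩ := mem_Ubar_iff.mp hv₂
  have h₁ : (k₁ : Mat) * P * v₁ = P * ρ * k₂ * P * v₂ := by
    calc (k₁ : Mat) * P * v₁ = P * ((u₁ * k₁ * v₁ : GL (Fin n) ℝ) : Mat) :=
          (lowerProj_mul_mul_mul_of_mem_Ugroup hu₁ hk₁).symm
      _ = P * ρ * P * ((u₂ * k₂ * v₂ : GL (Fin n) ℝ) : Mat) := by
          rw [h, Units.val_mul, lowerProj_mul_mul_lowerProj_of_mem_RSgroup hρ, ← mul_assoc]
      _ = P * ρ * k₂ * P * v₂ := by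
          rw [mul_assoc _ P, lowerProj_mul_mul_mul_of_mem_Ugroup hu₂ hk₂]
          simp only [mul_assoc]
          rfl
  have hk₁P : (k₁ : Mat) * P = P * ρ * k₂ * P := by
    calc (k₁ : Mat) * P = k₁ * P * v₁ * P := by rw [mul_assoc _ (v₁ : Mat), hv₁P, mul_assoc, hPP]
      _ = P * ρ * k₂ * P * v₂ * P := by rw [h₁]
      _ = P * ρ * k₂ * P := by rw [mul_assoc _ (v₂ : Mat), hv₂P, mul_assoc _ P P, hPP]
  have hPv : P * (v₁ : Mat) = P * v₂ := by
    rw [← Units.mul_right_inj k₁, ← mul_assoc, ← mul_assoc, h₁, hk₁P]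
  refine ⟨Units.ext ?_, ?_⟩
  · calc (v₁ : Mat) = P * v₁ + (1 - P) * v₁ := by rw [sub_mul, one_mul, add_sub_cancel]
      _ = P * v₂ + (1 - P) * v₂ := by rw [hPv, hv₁', hv₂']
      _ = v₂ := by rw [sub_mul, one_mul, add_sub_cancel]
  · calc (k₁ : Mat) = k₁ * P + k₁ * (1 - P) := by rw [mul_sub, mul_one, add_sub_cancel]
      _ = P * ρ * P * k₂ + (1 - P) * k₂ := by
        rw [hk₁P, hk₁.2, hk₂.1, mul_assoc _ P (k₂ : Mat), hk₂c, ← mul_assoc]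
      _ = (1 - P + P * ρ * P) * k₂ := by rw [add_mul, add_comm]

lemma Qgroup'_eq_of_mul_eq {p₁ p₂ q₁ q₂ w : GL (Fin n) ℝ} (hp₁ : p₁ ∈ Pgroup' n r)
    (hp₂ : p₂ ∈ Pgroup' n r) (hq₁ : q₁ ∈ Qgroup' n r) (hq₂ : q₂ ∈ Qgroup' n r)
    (hw : (w : Mat) * pivotProj r = pivotProj r) (h : p₁ * q₁ = w * (p₂ * q₂)) : q₁ = q₂ := by
  have hq : q₁ * q₂⁻¹ = p₁⁻¹ * w * p₂ := by
    rw [← inv_mul_cancel_left p₁ q₁, h]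
    group
  rw [← mul_inv_eq_one]
  refine Units.ext (eq_one_of_mul_eq_of_mul_one_sub_eq (e := (pivotProj r : Mat)) ?_ ?_)
  · rw [hq, Units.val_mul, Units.val_mul, mul_assoc, (mem_Pgroup'_iff.mp hp₂).2.2, mul_assoc, hw,
      inv_mul_eq_self_of_mul_eq_self (mem_Pgroup'_iff.mp hp₁).2.2]
  · rw [Units.val_mul, mul_assoc, inv_mul_eq_self_of_mul_eq_self (mem_Qgroup'_iff.mp hq₂).2,
      (mem_Qgroup'_iff.mp hq₁).2]

lemma Ugroup_eq_of_eq_mul {u₁ u₂ w ρ : GL (Fin n) ℝ} (hu₁ : u₁ ∈ Ugroup n r)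
    (hu₂ : u₂ ∈ Ugroup n r) (hw : w ∈ Ngroup' n r)
    (hρ : (ρ : Mat) * pivotProj r = pivotProj r) (h : ρ = u₁ * w * u₂⁻¹) : u₁ = u₂ := by
  obtain ⟨hwP, hwE⟩ := mul_eq_of_mem_Ngroup' hw
  -- `w` fixes the column `z` of `u₂⁻¹`: `P z = E`, and `w` fixes `E` and the image of `1 - P`
  set z : Mat := ((u₂⁻¹ : GL (Fin n) ℝ) : Mat) * pivotProj r
  have hPz : lowerProj r * z = pivotProj r := by
    rw [← mul_assoc, mul_inv_eq_self_of_mul_eq_self (mem_Ugroup_iff.mp hu₂).1]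
    exact lowerProj_mul_pivotProj
  have hwz : (w : Mat) * z = z := by
    calc (w : Mat) * z = (w : Mat) * (lowerProj r * z) + (w : Mat) * (1 - lowerProj r) * z := by
          rw [mul_assoc, ← mul_add, sub_mul, one_mul, add_sub_cancel]
      _ = z := by rw [hPz, hwE, hwP, ← hPz, sub_mul, one_mul, add_sub_cancel]
  rw [← mul_inv_eq_one]
  refine Units.ext (eq_one_of_mul_eq_of_mul_one_sub_eq (e := (pivotProj r : Mat)) ?_ ?_)
  · calc ((u₁ * u₂⁻¹ : GL (Fin n) ℝ) : Mat) * pivotProj r = (u₁ : Mat) * z := by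
          rw [Units.val_mul, mul_assoc]
      _ = (ρ : Mat) * pivotProj r := by
          rw [h, Units.val_mul, Units.val_mul, mul_assoc, mul_assoc, hwz]
      _ = pivotProj r := hρ
  · rw [Units.val_mul, mul_assoc, inv_mul_eq_self_of_mul_eq_self (mem_Ugroup_iff.mp hu₂).2,
      (mem_Ugroup_iff.mp hu₁).2]

theorem eq_of_mul_inv_mem_RSgroup {u₁ u₂ p₁ p₂ q₁ q₂ v₁ v₂ : GL (Fin n) ℝ}
    (hu₁ : u₁ ∈ Ugroup n r) (hu₂ : u₂ ∈ Ugroup n r) (hp₁ : p₁ ∈ Pgroup' n r)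
    (hp₂ : p₂ ∈ Pgroup' n r) (hq₁ : q₁ ∈ Qgroup' n r) (hq₂ : q₂ ∈ Qgroup' n r)
    (hv₁ : v₁ ∈ Ubar n r) (hv₂ : v₂ ∈ Ubar n r)
    (hρ : (u₁ * p₁ * q₁ * v₁) * (u₂ * p₂ * q₂ * v₂)⁻¹ ∈ RSgroup n r) :
    u₁ = u₂ ∧ q₁ = q₂ ∧ v₁ = v₂ ∧ p₂ * p₁⁻¹ ∈ Ngroup' n r := by
  set ρ := (u₁ * p₁ * q₁ * v₁) * (u₂ * p₂ * q₂ * v₂)⁻¹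
  obtain ⟨rfl, hk⟩ := Ubar_eq_and_eq_lowerBlock_mul hρ hu₁ hu₂ (isBlockDiag_mul_of_mem hp₁ hq₁)
    (isBlockDiag_mul_of_mem hp₂ hq₂) hv₁ hv₂ (by simp only [ρ]; group)
  set w := (p₁ * q₁) * (p₂ * q₂)⁻¹
  have hw : w ∈ Ngroup' n r := mem_Ngroup'_of_mem_RSgroup hρ <| by
    rw [Units.val_mul, hk, mul_assoc, ← Units.val_mul, mul_inv_cancel, Units.val_one, mul_one]
  obtain rfl : q₁ = q₂ := Qgroup'_eq_of_mul_eq hp₁ hp₂ hq₁ hq₂ (mul_eq_of_mem_Ngroup' hw).2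
    (by simp only [w]; group)
  refine ⟨Ugroup_eq_of_eq_mul hu₁ hu₂ hw (mul_pivotProj_of_mem_RSgroup hρ) ?_, rfl, rfl, ?_⟩
  · simp only [ρ, w]
    group
  · convert inv_mem_Ngroup' hw using 1
    simp only [w]
    group

/-! ### Existence off the zero set of two minors -/

lemma exists_mem_RSgroup_mem_Ugroup {g : GL (Fin n) ℝ}
    (hg : lowerProj r * (g : Mat) = lowerProj r) :
    ∃ ρ ∈ RSgroup n r, ∃ u ∈ Ugroup n r, g = ρ * u := by
  have hg' : lowerProj r * ((g⁻¹ : GL (Fin n) ℝ) : Mat) = lowerProj r :=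
    mul_inv_eq_self_of_mul_eq_self hg
  -- `1 + z` is the identity with its column `r` replaced by that of `g⁻¹`
  set z : Mat := (((g⁻¹ : GL (Fin n) ℝ) : Mat) - 1) * pivotProj r
  have hEz : pivotProj r * z = 0 := by
    rw [← mul_assoc, mul_sub, ← pivotProj_mul_lowerProj, mul_assoc, hg', mul_one, sub_self,
      zero_mul]
  obtain ⟨w, hw⟩ : ∃ w : GL (Fin n) ℝ, (w : Mat) = 1 + z := by
    refine exists_val_eq_one_add_of_mul_self_eq_zero ?_
    calc z * z = (((g⁻¹ : GL (Fin n) ℝ) : Mat) - 1) * (pivotProj r * z) := mul_assoc _ _ _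
      _ = 0 := by rw [hEz, mul_zero]
  have hwU : w ∈ Ugroup n r := by
    refine mem_Ugroup_iff.mpr ⟨?_, ?_⟩
    · rw [hw, mul_add, mul_one, ← mul_assoc, mul_sub, hg', mul_one, sub_self, zero_mul, add_zero]
    · rw [hw, add_mul, one_mul, mul_assoc, mul_sub, mul_one, pivotProj_mul_pivotProj, sub_self,
        mul_zero, add_zero]
  refine ⟨g * w, mem_RSgroup_of ?_ ?_, w⁻¹, inv_mem_Ugroup hwU, by group⟩
  · rw [Units.val_mul, ← mul_assoc, hg, (mem_Ugroup_iff.mp hwU).1]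
  · rw [Units.val_mul, mul_assoc, hw, add_mul, one_mul, mul_assoc, pivotProj_mul_pivotProj,
      sub_mul, one_mul, add_sub_cancel, ← mul_assoc, ← Units.val_mul, mul_inv_cancel,
      Units.val_one, one_mul]

lemma exists_mem_Pgroup'_mem_Qgroup' {k : GL (Fin n) ℝ} (hk : IsBlockDiag r (k : Mat))
    (hdet : lowerMinor (r + 1) (k : Mat) ≠ 0) :
    ∃ p ∈ Pgroup' n r, ∃ q ∈ Qgroup' n r, k = p * q := by
  -- `p` is `k` with its column `r` replaced by the standard basis vector
  obtain ⟨p, hp⟩ : ∃ p : GL (Fin n) ℝ, (p : Mat) = (k : Mat) * (1 - pivotProj r) + pivotProj r :=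
    ⟨.mkOfDetNeZero _ ((det_mul_one_sub_pivotProj_add_pivotProj hk).trans_ne hdet), rfl⟩
  have hpP : p ∈ Pgroup' n r := by
    refine mem_Pgroup'_iff.mpr ⟨?_, ?_, ?_⟩
    · rw [one_sub_lowerProj, diagInd_mul_eq_iff]
      intro i j hi
      rw [hp, mul_one_sub_pivotProj_add_pivotProj_apply]
      split_ifs
      · rfl
      · exact hk.apply_eq (Or.inl hi)
    · rw [one_sub_lowerProj, mul_diagInd_eq_iff]
      intro i j hj
      rw [hp, mul_one_sub_pivotProj_add_pivotProj_apply, if_neg (by omega), hk.apply_eq (Or.inr hj)]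
    · rw [pivotProj, mul_diagInd_eq_iff]
      intro i j hj
      rw [hp, mul_one_sub_pivotProj_add_pivotProj_apply, if_pos hj]
  have hpE : (p : Mat) * (1 - pivotProj r) = (k : Mat) * (1 - pivotProj r) := by
    simp [hp, add_mul, mul_sub, sub_mul, mul_assoc]
  refine ⟨p, hpP, p⁻¹ * k, mem_Qgroup'_iff.mpr ⟨?_, ?_⟩, by group⟩
  · rw [Units.val_mul, ← mul_assoc, mul_inv_eq_self_of_mul_eq_self (mem_Pgroup'_iff.mp hpP).1,
      hk.1]
  · rw [Units.val_mul, mul_assoc, ← hpE, ← mul_assoc, ← Units.val_mul, inv_mul_cancel,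
      Units.val_one, one_mul]

lemma exists_mem_Ubar {g k : GL (Fin n) ℝ} (hk : (k : Mat) = lowerBlock r g) :
    ∃ v ∈ Ubar n r, lowerProj r * (g : Mat) = lowerProj r * (k : Mat) * (v : Mat) := by
  set P : Mat := lowerProj r
  have hPP : P * P = P := lowerProj_mul_lowerProj
  have hQP : (1 - P) * P = 0 := by rw [sub_mul, one_mul, hPP, sub_self]
  have hPk : P * k = k * P := (hk ▸ isBlockDiag_lowerBlock (g : Mat)).lowerProj_mul_comm
  set y : Mat := P * ((k⁻¹ : GL (Fin n) ℝ) : Mat) * g * (1 - P)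
  have hyP : y * P = 0 := by rw [mul_assoc, hQP, mul_zero]
  have hQy : (1 - P) * y = 0 := by simp only [y, ← mul_assoc, hQP, zero_mul]
  obtain ⟨v, hv⟩ := exists_val_eq_one_add_of_mul_self_eq_zero (z := y) <| by
    calc y * y = P * ((k⁻¹ : GL (Fin n) ℝ) : Mat) * g * ((1 - P) * y) := by simp only [y, mul_assoc]
      _ = 0 := by rw [hQy, mul_zero]
  refine ⟨v, mem_Ubar_iff.mpr ⟨?_, ?_⟩, ?_⟩
  · rw [hv, mul_add, mul_one, hQy, add_zero]
  · rw [hv, add_mul, one_mul, hyP, add_zero]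
  · calc P * (g : Mat) = P * g * P + P * g * (1 - P) := by rw [mul_sub, mul_one, add_sub_cancel]
      _ = P * k + P * k * y := by
          congr 1
          · rw [hk, lowerProj_mul_lowerBlock]
          · simp only [y, ← mul_assoc]
            rw [mul_assoc _ (k : Mat), ← hPk, ← mul_assoc, hPP, mul_assoc _ (k : Mat),
              ← Units.val_mul, mul_inv_cancel, Units.val_one, mul_one]
      _ = P * k * v := by rw [hv, mul_add, mul_one]

theorem mem_product_of_lowerMinor_ne_zero {g : GL (Fin n) ℝ} (h₁ : lowerMinor r (g : Mat) ≠ 0)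
    (h₂ : lowerMinor (r + 1) (g : Mat) ≠ 0) :
    ∃ ρ ∈ RSgroup n r, ∃ u ∈ Ugroup n r, ∃ p ∈ Pgroup' n r, ∃ q ∈ Qgroup' n r,
      ∃ v ∈ Ubar n r, g = ρ * u * p * q * v := by
  obtain ⟨k, hk⟩ : ∃ k : GL (Fin n) ℝ, (k : Mat) = lowerBlock r g :=
    ⟨.mkOfDetNeZero _ ((det_lowerBlock _).trans_ne h₁), rfl⟩
  obtain ⟨v, hv, hPg⟩ := exists_mem_Ubar hk
  obtain ⟨ρ, hρ, u, hu, hρu⟩ := exists_mem_RSgroup_mem_Ugroup (g := g * v⁻¹ * k⁻¹) (r := r) <| by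
    rw [Units.val_mul, Units.val_mul, ← mul_assoc, ← mul_assoc, hPg, mul_assoc _ (v : Mat),
      ← Units.val_mul, mul_inv_cancel, Units.val_one, mul_one, mul_assoc, ← Units.val_mul,
      mul_inv_cancel, Units.val_one, mul_one]
  obtain ⟨p, hp, q, hq, hpq⟩ := exists_mem_Pgroup'_mem_Qgroup' (hk ▸ isBlockDiag_lowerBlock _)
    (by rwa [hk, lowerMinor_lowerBlock r.le_succ])
  refine ⟨ρ, hρ, u, hu, p, hp, q, hq, v, hv, ?_⟩
  calc g = g * v⁻¹ * k⁻¹ * k * v := by group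
    _ = ρ * u * p * q * v := by rw [hρu, hpq]; group

/-! ### Haar-null sets -/

theorem measure_setOf_eq_zero_of_lines {E : Type*} [NormedAddCommGroup E] [NormedSpace ℝ E]
    [MeasurableSpace E] [BorelSpace E] [SecondCountableTopology E] (μ : Measure E) [SFinite μ]
    [μ.IsAddRightInvariant] {f : E → ℝ} (hf : Continuous f) (w : E)
    (h : ∀ x, volume {t : ℝ | f (x + t • w) = 0} = 0) : μ {x | f x = 0} = 0 := by
  set S := {p : E × ℝ | f (p.1 + p.2 • w) = 0}
  have hS : MeasurableSet S := (measurableSet_singleton 0).preimage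
    (hf.comp (continuous_fst.add (continuous_snd.smul continuous_const))).measurable
  have h₁ : μ.prod volume S = 0 := by
    rw [Measure.prod_apply hS]
    simp only [S, Set.preimage_ofPred_eq, h, lintegral_zero]
  have h₂ : μ.prod volume S = μ {x | f x = 0} * ⊤ := by
    rw [Measure.prod_apply_symm hS, ← Real.volume_univ, ← setLIntegral_const, setLIntegral_univ]
    congr 1 with t
    exact measure_preimage_add_right μ (t • w) {x | f x = 0}
  rwa [h₁, eq_comm, mul_eq_zero, or_iff_left ENNReal.top_ne_zero] at h₂

lemma continuous_lowerMinor (s : ℕ) : Continuous (lowerMinor s : Mat → ℝ) :=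
  (continuous_id.matrix_submatrix _ _).matrix_det

lemma volume_setOf_lowerMinor_mul_eq_zero (s : ℕ) (C : GL (Fin n) ℝ) :
    volume {B : Fin n → Fin n → ℝ | lowerMinor s (of B * (C : Mat)) = 0} = 0 := by
  set w : Mat := lowerProj s * ((C⁻¹ : GL (Fin n) ℝ) : Mat)
  refine measure_setOf_eq_zero_of_lines volume
    ((continuous_lowerMinor s).comp (continuous_id.matrix_mul continuous_const)) (of.symm w)
    fun B => (Set.Finite.measure_zero ?_ _)
  convert finite_setOf_lowerMinor_add_smul_eq_zero s (of B * (C : Mat)) using 4 with t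
  rw [show of (B + t • of.symm w) = of B + t • w from rfl, add_mul, smul_mul_assoc, mul_assoc,
    ← Units.val_mul, inv_mul_cancel, Units.val_one, mul_one]

instance : SecondCountableTopology Mat :=
  inferInstanceAs (SecondCountableTopology (Fin n → Fin n → ℝ))

instance : LocallyCompactSpace Mat :=
  inferInstanceAs (LocallyCompactSpace (Fin n → Fin n → ℝ))

instance : SecondCountableTopology (GL (Fin n) ℝ) :=
  have := (MulOpposite.opHomeomorph (M := Mat)).symm.secondCountableTopology
  Units.isEmbedding_embedProduct.secondCountableTopology

instance : LocallyCompactSpace (GL (Fin n) ℝ) :=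
  Units.isClosedEmbedding_embedProduct.locallyCompactSpace

instance : BorelSpace (GL (Fin n) ℝ) := ⟨rfl⟩

theorem haar_setOf_val_mem_eq_zero (μ : Measure (GL (Fin n) ℝ)) [μ.IsHaarMeasure] {Z : Set Mat}
    (hZ : IsClosed Z)
    (h : ∀ C : GL (Fin n) ℝ, volume {B : Fin n → Fin n → ℝ | of B * (C : Mat) ∈ Z} = 0) :
    μ {g | (g : Mat) ∈ Z} = 0 := by
  set U := {B : Fin n → Fin n → ℝ | (of B).det ≠ 0}
  have hU : IsOpen U := isOpen_ne_fun continuous_id.matrix_det continuous_const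
  have hUpos : 0 < volume U := hU.measure_pos volume ⟨of.symm 1, by simp [U]⟩
  set ν : Measure (Fin n → Fin n → ℝ) := volume.restrict U
  set S := {p : (Fin n → Fin n → ℝ) × GL (Fin n) ℝ | of p.1 * (p.2 : Mat) ∈ Z}
  have hS : MeasurableSet S :=
    (hZ.preimage (f := fun p : (Fin n → Fin n → ℝ) × GL (Fin n) ℝ => of p.1 * (p.2 : Mat))
      (by fun_prop)).measurableSet
  -- the slice over `B ∈ U` is a left translate of `{g | ↑g ∈ Z}`; the slice over `g` is null
  have h₁ : (ν.prod μ) S = μ {g | (g : Mat) ∈ Z} * volume U := by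
    rw [Measure.prod_apply hS, ← setLIntegral_const]
    refine setLIntegral_congr_fun hU.measurableSet fun B hB => ?_
    obtain ⟨w, hw⟩ := (isUnit_iff_isUnit_det _).mpr (isUnit_iff_ne_zero.mpr hB)
    rw [← measure_preimage_mul μ w {g | (g : Mat) ∈ Z}]
    congr 1 with g
    simp [S, hw]
  have h₂ : (ν.prod μ) S = 0 := by
    rw [Measure.prod_apply_symm hS]
    have hslice : ∀ g, ν ((fun B => (B, g)) ⁻¹' S) = 0 := fun g =>
      nonpos_iff_eq_zero.mp ((Measure.restrict_apply_le _ _).trans (h g).le)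
    simp only [hslice, lintegral_zero]
  rwa [h₂, eq_comm, mul_eq_zero, or_iff_left hUpos.ne'] at h₁

theorem haar_compl_product_eq_zero (μ : Measure (GL (Fin n) ℝ)) [μ.IsHaarMeasure] :
    μ {g : GL (Fin n) ℝ | ∃ ρ ∈ RSgroup n r, ∃ u ∈ Ugroup n r, ∃ p ∈ Pgroup' n r,
      ∃ q ∈ Qgroup' n r, ∃ v ∈ Ubar n r, g = ρ * u * p * q * v}ᶜ = 0 := by
  have hnull : ∀ s, μ {g : GL (Fin n) ℝ | lowerMinor s (g : Mat) = 0} = 0 := fun s =>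
    haar_setOf_val_mem_eq_zero μ (isClosed_eq (continuous_lowerMinor s) continuous_const)
      (volume_setOf_lowerMinor_mul_eq_zero s)
  refine measure_mono_null (fun g hg => ?_) (measure_union_null (hnull r) (hnull (r + 1)))
  by_contra h
  simp only [Set.mem_union, Set.mem_ofPred_eq, not_or] at h
  exact hg (mem_product_of_lowerMinor_ne_zero h.1 h.2)

end RSCoset

theorem RS_coset_decomposition_general (n r : ℕ) :
    (∀ u₁ u₂ p₁ p₂ q₁ q₂ v₁ v₂ : GL (Fin n) ℝ,
      u₁ ∈ Ugroup n r → u₂ ∈ Ugroup n r → p₁ ∈ Pgroup' n r → p₂ ∈ Pgroup' n r →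
      q₁ ∈ Qgroup' n r → q₂ ∈ Qgroup' n r → v₁ ∈ Ubar n r → v₂ ∈ Ubar n r →
      (u₁ * p₁ * q₁ * v₁) * (u₂ * p₂ * q₂ * v₂)⁻¹ ∈ RSgroup n r →
      u₁ = u₂ ∧ q₁ = q₂ ∧ v₁ = v₂ ∧ p₂ * p₁⁻¹ ∈ Ngroup' n r) ∧
    (∀ (μ : Measure (GL (Fin n) ℝ)), μ.IsHaarMeasure →
      μ {g : GL (Fin n) ℝ | ∃ ρ ∈ RSgroup n r, ∃ u ∈ Ugroup n r, ∃ p ∈ Pgroup' n r,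
        ∃ q ∈ Qgroup' n r, ∃ v ∈ Ubar n r, g = ρ * u * p * q * v}ᶜ = 0) :=
  ⟨fun _ _ _ _ _ _ _ _ => RSCoset.eq_of_mul_inv_mem_RSgroup,
    fun μ _ => RSCoset.haar_compl_product_eq_zero μ⟩

/-- For `n > r ≥ 0`: (i) if `R_r u₁ p₁ q₁ v₁ = R_r u₂ p₂ q₂ v₂` with `uᵢ ∈ U_r`,
`pᵢ ∈ P'_{n-r}`, `qᵢ ∈ Q'_{n-r}`, `vᵢ ∈ Ū_{r,n-r}`, then `u₁ = u₂`, `q₁ = q₂`, `v₁ = v₂`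
and `p₂ p₁⁻¹ ∈ N'_{n-r}`; (ii) the complement of the product set
`R_r ⋅ U_r ⋅ P'_{n-r} ⋅ Q'_{n-r} ⋅ Ū_{r,n-r}` in `GL_n(ℝ)` is null for every Haar
measure on `GL_n(ℝ)`. -/
theorem RS_coset_decomposition (n r : ℕ) (hn : r < n) :
    (∀ u₁ u₂ p₁ p₂ q₁ q₂ v₁ v₂ : GL (Fin n) ℝ,
      u₁ ∈ Ugroup n r → u₂ ∈ Ugroup n r → p₁ ∈ Pgroup' n r → p₂ ∈ Pgroup' n r →
      q₁ ∈ Qgroup' n r → q₂ ∈ Qgroup' n r → v₁ ∈ Ubar n r → v₂ ∈ Ubar n r →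
      (u₁ * p₁ * q₁ * v₁) * (u₂ * p₂ * q₂ * v₂)⁻¹ ∈ RSgroup n r →
      u₁ = u₂ ∧ q₁ = q₂ ∧ v₁ = v₂ ∧ p₂ * p₁⁻¹ ∈ Ngroup' n r) ∧
    (∀ (μ : Measure (GL (Fin n) ℝ)), μ.IsHaarMeasure →
      μ {g : GL (Fin n) ℝ | ∃ ρ ∈ RSgroup n r, ∃ u ∈ Ugroup n r, ∃ p ∈ Pgroup' n r,
        ∃ q ∈ Qgroup' n r, ∃ v ∈ Ubar n r, g = ρ * u * p * q * v}ᶜ = 0) :=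
  RS_coset_decomposition_general n r
end

section
/- Fix integers n > r ≥ 0. The multiplication map (P_{r,n−r} ∩ P°_{r+1}) × U_r × Q'_{n−r} × Ū_{r,n−r} → GL_n(ℝ), (τ, u, q, ū) ↦ τ u q ū, is injective and its image is open in GL_n(ℝ); in particular it is an open embedding. -/
open Matrix

/-- `P_{r,n-r} ∩ P°_{r+1} ⊆ GL_n(ℝ)`: block upper-triangular matrices (for the blocks
`(r, n-r)`) whose column of index `r` equals the standard basis vector `e_{r+1}`. -/
def Tgroup (n r : ℕ) : Set (GL (Fin n) ℝ) :=
  {g | (∀ i j : Fin n, r ≤ (i : ℕ) → (j : ℕ) < r →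
          (g : Matrix (Fin n) (Fin n) ℝ) i j = 0) ∧
       (∀ i j : Fin n, (j : ℕ) = r →
          (g : Matrix (Fin n) (Fin n) ℝ) i j = if (i : ℕ) = r then 1 else 0)}

/-!
Split `Fin n = Fin r ⊕ Fin (n - r)` and write matrices in block form. A product `τ u q ū` is
`[A, R; 0, S] [1, w; 0, 1] [1, 0; 0, Q] [1, 0; x, 1] = [A + P Q x, P Q; S Q x, S Q]` with
`P = A w + R`. The first column of `S` is `e₁` and every other column of `Q` is standard, so `S`
is recovered from `D = S Q` by resetting the first column of `D` to `e₁`; then `Q`, `x`, `P` and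
`A` follow by cancellation, and `R`, `A w` are the parts of `P` off and on the first column.
Running the same recipe backwards factors every `g` for which `D` and `D` with first column reset
to `e₁` are invertible (with `A` the Schur complement of `D`), so the image is the set where two
continuous determinants do not vanish, which is open.
-/

namespace Matrix

variable {K ι κ : Type*} [CommRing K] [DecidableEq κ] {o : κ}

theorem updateCol_mul_eq_left [Fintype κ] {S Q : Matrix κ κ K}
    (hS : ∀ i, S i o = if i = o then 1 else 0)
    (hQ : ∀ j ≠ o, ∀ i, Q i j = if i = j then 1 else 0) :
    updateCol (S * Q) o (fun i => if i = o then 1 else 0) = S := by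
  ext i j
  rcases eq_or_ne j o with rfl | hj
  · simp [hS]
  · simp [updateCol_ne hj, mul_apply, hQ j hj]

theorem eq_and_eq_of_mul_eq_mul [Fintype κ] {S₁ S₂ Q₁ Q₂ : Matrix κ κ K}
    (hS₁ : ∀ i, S₁ i o = if i = o then 1 else 0) (hS₂ : ∀ i, S₂ i o = if i = o then 1 else 0)
    (hQ₁ : ∀ j ≠ o, ∀ i, Q₁ i j = if i = j then 1 else 0)
    (hQ₂ : ∀ j ≠ o, ∀ i, Q₂ i j = if i = j then 1 else 0) (hS : IsUnit S₂.det)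
    (h : S₁ * Q₁ = S₂ * Q₂) : S₁ = S₂ ∧ Q₁ = Q₂ := by
  obtain rfl : S₁ = S₂ := by
    rw [← updateCol_mul_eq_left hS₁ hQ₁, h, updateCol_mul_eq_left hS₂ hQ₂]
  exact ⟨rfl, mul_right_injective_of_inv _ _ (nonsing_inv_mul _ hS) h⟩

theorem exists_mul_eq [Fintype κ] (D : Matrix κ κ K)
    (h : IsUnit (updateCol D o (fun i => if i = o then 1 else 0)).det) :
    ∃ S Q : Matrix κ κ K, (∀ i, S i o = if i = o then 1 else 0) ∧
      (∀ j ≠ o, ∀ i, Q i j = if i = j then 1 else 0) ∧ IsUnit S.det ∧ S * Q = D := by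
  set S := updateCol D o (fun i => if i = o then 1 else 0)
  refine ⟨S, S⁻¹ * D, fun i => updateCol_self, fun j hj i => ?_, h,
    mul_nonsing_inv_cancel_left _ _ h⟩
  have hSD : (S⁻¹ * D) i j = (S⁻¹ * S) i j := by simp [S, mul_apply, updateCol_ne hj]
  rw [hSD, nonsing_inv_mul _ h, one_apply]

theorem updateCol_mul_add_eq_right [Fintype ι] {A : Matrix ι ι K} {w R : Matrix ι κ K}
    (hR : ∀ i, R i o = 0) (hw : ∀ j ≠ o, ∀ i, w i j = 0) :
    updateCol (A * w + R) o 0 = R := by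
  ext i j
  rcases eq_or_ne j o with rfl | hj
  · simp [hR]
  · simp [updateCol_ne hj, mul_apply, hw j hj]

theorem eq_and_eq_of_mul_add_eq_mul_add [Fintype ι] [DecidableEq ι] {A : Matrix ι ι K}
    {w₁ w₂ R₁ R₂ : Matrix ι κ K} (hR₁ : ∀ i, R₁ i o = 0) (hR₂ : ∀ i, R₂ i o = 0)
    (hw₁ : ∀ j ≠ o, ∀ i, w₁ i j = 0) (hw₂ : ∀ j ≠ o, ∀ i, w₂ i j = 0) (hA : IsUnit A.det)
    (h : A * w₁ + R₁ = A * w₂ + R₂) : w₁ = w₂ ∧ R₁ = R₂ := by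
  obtain rfl : R₁ = R₂ := by
    rw [← updateCol_mul_add_eq_right hR₁ hw₁, h, updateCol_mul_add_eq_right hR₂ hw₂]
  exact ⟨mul_right_injective_of_inv _ _ (nonsing_inv_mul _ hA) (add_right_cancel h), rfl⟩

theorem exists_mul_add_eq [Fintype ι] [DecidableEq ι] (P : Matrix ι κ K) {A : Matrix ι ι K}
    (hA : IsUnit A.det) :
    ∃ w R : Matrix ι κ K, (∀ j ≠ o, ∀ i, w i j = 0) ∧ (∀ i, R i o = 0) ∧ A * w + R = P := by
  set R := updateCol P o 0
  refine ⟨A⁻¹ * (P - R), R, fun j hj i => ?_, fun i => updateCol_self, ?_⟩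
  · simp [R, mul_apply, updateCol_ne hj]
  · rw [mul_nonsing_inv_cancel_left _ _ hA, sub_add_cancel]

variable [Fintype ι] [Fintype κ] [DecidableEq ι]

def blockProduct (A : Matrix ι ι K) (R w : Matrix ι κ K) (S Q : Matrix κ κ K)
    (x : Matrix κ ι K) : Matrix (ι ⊕ κ) (ι ⊕ κ) K :=
  fromBlocks A R 0 S * fromBlocks 1 w 0 1 * fromBlocks 1 0 0 Q * fromBlocks 1 0 x 1

theorem blockProduct_eq_fromBlocks (A : Matrix ι ι K) (R w : Matrix ι κ K) (S Q : Matrix κ κ K)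
    (x : Matrix κ ι K) :
    blockProduct A R w S Q x =
      fromBlocks (A + (A * w + R) * Q * x) ((A * w + R) * Q) (S * Q * x) (S * Q) := by
  simp [blockProduct, fromBlocks_multiply, Matrix.mul_assoc]

theorem blockProduct_inj {A₁ A₂ : Matrix ι ι K} {R₁ R₂ w₁ w₂ : Matrix ι κ K}
    {S₁ S₂ Q₁ Q₂ : Matrix κ κ K} {x₁ x₂ : Matrix κ ι K}
    (hR₁ : ∀ i, R₁ i o = 0) (hR₂ : ∀ i, R₂ i o = 0)
    (hS₁ : ∀ i, S₁ i o = if i = o then 1 else 0) (hS₂ : ∀ i, S₂ i o = if i = o then 1 else 0)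
    (hw₁ : ∀ j ≠ o, ∀ i, w₁ i j = 0) (hw₂ : ∀ j ≠ o, ∀ i, w₂ i j = 0)
    (hQ₁ : ∀ j ≠ o, ∀ i, Q₁ i j = if i = j then 1 else 0)
    (hQ₂ : ∀ j ≠ o, ∀ i, Q₂ i j = if i = j then 1 else 0)
    (hA : IsUnit A₂.det) (hS : IsUnit S₂.det) (hQ : IsUnit Q₂.det)
    (h : blockProduct A₁ R₁ w₁ S₁ Q₁ x₁ = blockProduct A₂ R₂ w₂ S₂ Q₂ x₂) :
    A₁ = A₂ ∧ R₁ = R₂ ∧ S₁ = S₂ ∧ w₁ = w₂ ∧ Q₁ = Q₂ ∧ x₁ = x₂ := by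
  simp only [blockProduct_eq_fromBlocks, fromBlocks_inj] at h
  obtain ⟨h₁₁, h₁₂, h₂₁, h₂₂⟩ := h
  obtain ⟨rfl, rfl⟩ := eq_and_eq_of_mul_eq_mul hS₁ hS₂ hQ₁ hQ₂ hS h₂₂
  have hSQ : IsUnit (S₁ * Q₁).det := by rw [det_mul]; exact hS.mul hQ
  obtain rfl : x₁ = x₂ := mul_right_injective_of_inv _ _ (nonsing_inv_mul _ hSQ) h₂₁
  have hP : A₁ * w₁ + R₁ = A₂ * w₂ + R₂ :=
    mul_left_injective_of_inv _ _ (mul_nonsing_inv _ hQ) h₁₂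
  obtain rfl : A₁ = A₂ := by rw [hP] at h₁₁; exact add_right_cancel h₁₁
  obtain ⟨rfl, rfl⟩ := eq_and_eq_of_mul_add_eq_mul_add hR₁ hR₂ hw₁ hw₂ hA hP
  exact ⟨rfl, rfl, rfl, rfl, rfl, rfl⟩

theorem exists_blockProduct_eq {A' : Matrix ι ι K} {B : Matrix ι κ K} {C : Matrix κ ι K}
    {D : Matrix κ κ K} (hM : IsUnit (fromBlocks A' B C D).det) (hD : IsUnit D.det)
    (hSD : IsUnit (updateCol D o (fun i => if i = o then 1 else 0)).det) :
    ∃ (A : Matrix ι ι K) (R w : Matrix ι κ K) (S Q : Matrix κ κ K) (x : Matrix κ ι K),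
      (∀ i, R i o = 0) ∧ (∀ i, S i o = if i = o then 1 else 0) ∧ (∀ j ≠ o, ∀ i, w i j = 0) ∧
      (∀ j ≠ o, ∀ i, Q i j = if i = j then 1 else 0) ∧ IsUnit A.det ∧ IsUnit S.det ∧
      IsUnit Q.det ∧ blockProduct A R w S Q x = fromBlocks A' B C D := by
  obtain ⟨S, Q, hS, hQ, hSu, hSQ⟩ := exists_mul_eq D hSD
  have hQu : IsUnit Q.det := isUnit_of_mul_isUnit_right (by rwa [← det_mul, hSQ])
  have hAu : IsUnit (A' - B * D⁻¹ * C).det := by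
    have := D.invertibleOfIsUnitDet hD
    rw [det_fromBlocks₂₂, invOf_eq_nonsing_inv] at hM
    exact isUnit_of_mul_isUnit_right hM
  obtain ⟨w, R, hw, hR, hwR⟩ := exists_mul_add_eq (B * Q⁻¹) hAu
  refine ⟨_, R, w, S, Q, D⁻¹ * C, hR, hS, hw, hQ, hAu, hSu, hQu, ?_⟩
  rw [blockProduct_eq_fromBlocks, hwR, hSQ, nonsing_inv_mul_cancel_right _ _ hQu,
    mul_nonsing_inv_cancel_left _ _ hD, ← Matrix.mul_assoc, sub_add_cancel]

end Matrix

theorem Fin.castAdd_ne_natAdd {r k : ℕ} (a : Fin r) (b : Fin k) :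
    Fin.castAdd k a ≠ Fin.natAdd r b :=
  Fin.ne_of_val_ne (by rw [Fin.val_castAdd, Fin.val_natAdd]; omega)

section BlockForm

variable {r k m : ℕ}

/-- Block coordinates: row and column `i` go to `Sum.inl i` for `i < r` and to
`Sum.inr (i - r)` otherwise, so `Sum.inr 0` indexes the paper's `(r+1)`-th column. -/
abbrev blockForm : Matrix (Fin (r + k)) (Fin (r + k)) ℝ ≃ₐ[ℝ]
    Matrix (Fin r ⊕ Fin k) (Fin r ⊕ Fin k) ℝ :=
  reindexAlgEquiv ℝ ℝ finSumFinEquiv.symm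

theorem exists_eq_blockForm_symm_fromBlocks (G : Matrix (Fin (r + k)) (Fin (r + k)) ℝ) :
    ∃ A B C D, G = blockForm.symm (fromBlocks A B C D) :=
  ⟨_, _, _, _, by rw [fromBlocks_toBlocks, AlgEquiv.symm_apply_apply]⟩

theorem eq_of_blockForm_eq {g g' : GL (Fin (r + k)) ℝ} (h : blockForm g.val = blockForm g'.val) :
    g = g' :=
  Units.ext (blockForm.injective h)

theorem isUnit_det_blockForm (g : GL (Fin (r + k)) ℝ) : IsUnit (blockForm g.val).det := by
  rw [det_reindexAlgEquiv]
  exact (isUnit_iff_isUnit_det _).mp g.isUnit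

theorem exists_blockForm_eq {X : Matrix (Fin r ⊕ Fin k) (Fin r ⊕ Fin k) ℝ} (hX : IsUnit X.det) :
    ∃ g : GL (Fin (r + k)) ℝ, blockForm g.val = X := by
  have hX' : IsUnit (blockForm.symm X) := by
    rwa [isUnit_iff_isUnit_det, symm_reindexAlgEquiv, det_reindexAlgEquiv]
  exact ⟨hX'.unit, by simp⟩

theorem mem_Tgroup_iff {g : GL (Fin (r + (m + 1))) ℝ} :
    g ∈ Tgroup (r + (m + 1)) r ↔ ∃ A R S, (∀ i, R i 0 = 0) ∧
      (∀ i, S i 0 = if i = 0 then 1 else 0) ∧ blockForm g.val = fromBlocks A R 0 S := by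
  obtain ⟨A, B, C, D, hg⟩ := exists_eq_blockForm_symm_fromBlocks g.val
  simp only [Tgroup, Set.mem_ofPred_eq, hg, AlgEquiv.apply_symm_apply,
    Fin.forall_fin_add (m := r) (n := m + 1)]
  simp [Nat.ne_of_lt, ← Matrix.ext_iff]
  aesop

theorem mem_Ugroup_iff {g : GL (Fin (r + (m + 1))) ℝ} :
    g ∈ Ugroup (r + (m + 1)) r ↔
      ∃ w, (∀ j ≠ 0, ∀ i, w i j = 0) ∧ blockForm g.val = fromBlocks 1 w 0 1 := by
  obtain ⟨A, B, C, D, hg⟩ := exists_eq_blockForm_symm_fromBlocks g.val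
  simp only [Ugroup, Set.mem_ofPred_eq, hg, AlgEquiv.apply_symm_apply,
    Fin.forall_fin_add (m := r) (n := m + 1)]
  simp [Nat.ne_of_lt, Fin.castAdd_ne_natAdd, (Fin.castAdd_ne_natAdd _ _).symm, ← Matrix.ext_iff,
    one_apply]
  aesop

theorem mem_Qgroup'_iff {g : GL (Fin (r + (m + 1))) ℝ} :
    g ∈ Qgroup' (r + (m + 1)) r ↔ ∃ Q, (∀ j ≠ 0, ∀ i, Q i j = if i = j then 1 else 0) ∧
      blockForm g.val = fromBlocks 1 0 0 Q := by
  obtain ⟨A, B, C, D, hg⟩ := exists_eq_blockForm_symm_fromBlocks g.val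
  simp only [Qgroup', Set.mem_ofPred_eq, hg, AlgEquiv.apply_symm_apply,
    Fin.forall_fin_add (m := r) (n := m + 1)]
  simp [Fin.castAdd_ne_natAdd, (Fin.castAdd_ne_natAdd _ _).symm, ← Matrix.ext_iff, one_apply,
    Nat.one_le_iff_ne_zero]
  aesop

theorem mem_Ubar_iff {g : GL (Fin (r + (m + 1))) ℝ} :
    g ∈ Ubar (r + (m + 1)) r ↔ ∃ x, blockForm g.val = fromBlocks 1 0 x 1 := by
  obtain ⟨A, B, C, D, hg⟩ := exists_eq_blockForm_symm_fromBlocks g.val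
  simp only [Ubar, Set.mem_ofPred_eq, hg, AlgEquiv.apply_symm_apply,
    Fin.forall_fin_add (m := r) (n := m + 1)]
  simp [Fin.castAdd_ne_natAdd, (Fin.castAdd_ne_natAdd _ _).symm, ← Matrix.ext_iff, one_apply]
  aesop

theorem blockForm_mul_mul_mul {τ u q v : GL (Fin (r + k)) ℝ} {A : Matrix (Fin r) (Fin r) ℝ}
    {R w : Matrix (Fin r) (Fin k) ℝ} {S Q : Matrix (Fin k) (Fin k) ℝ} {x : Matrix (Fin k) (Fin r) ℝ}
    (hτ : blockForm τ.val = fromBlocks A R 0 S) (hu : blockForm u.val = fromBlocks 1 w 0 1)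
    (hq : blockForm q.val = fromBlocks 1 0 0 Q) (hv : blockForm v.val = fromBlocks 1 0 x 1) :
    blockForm (τ * u * q * v).val = blockProduct A R w S Q x := by
  simp only [Units.val_mul, map_mul, hτ, hu, hq, hv, blockProduct]

theorem factorization_injective {τ₁ τ₂ u₁ u₂ q₁ q₂ v₁ v₂ : GL (Fin (r + (m + 1))) ℝ}
    (hτ₁ : τ₁ ∈ Tgroup (r + (m + 1)) r) (hτ₂ : τ₂ ∈ Tgroup (r + (m + 1)) r)
    (hu₁ : u₁ ∈ Ugroup (r + (m + 1)) r) (hu₂ : u₂ ∈ Ugroup (r + (m + 1)) r)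
    (hq₁ : q₁ ∈ Qgroup' (r + (m + 1)) r) (hq₂ : q₂ ∈ Qgroup' (r + (m + 1)) r)
    (hv₁ : v₁ ∈ Ubar (r + (m + 1)) r) (hv₂ : v₂ ∈ Ubar (r + (m + 1)) r)
    (h : τ₁ * u₁ * q₁ * v₁ = τ₂ * u₂ * q₂ * v₂) :
    τ₁ = τ₂ ∧ u₁ = u₂ ∧ q₁ = q₂ ∧ v₁ = v₂ := by
  obtain ⟨A₁, R₁, S₁, hR₁, hS₁, hτ₁⟩ := mem_Tgroup_iff.1 hτ₁
  obtain ⟨A₂, R₂, S₂, hR₂, hS₂, hτ₂⟩ := mem_Tgroup_iff.1 hτ₂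
  obtain ⟨w₁, hw₁, hu₁⟩ := mem_Ugroup_iff.1 hu₁
  obtain ⟨w₂, hw₂, hu₂⟩ := mem_Ugroup_iff.1 hu₂
  obtain ⟨Q₁, hQ₁, hq₁⟩ := mem_Qgroup'_iff.1 hq₁
  obtain ⟨Q₂, hQ₂, hq₂⟩ := mem_Qgroup'_iff.1 hq₂
  obtain ⟨x₁, hv₁⟩ := mem_Ubar_iff.1 hv₁
  obtain ⟨x₂, hv₂⟩ := mem_Ubar_iff.1 hv₂
  have hAS := isUnit_det_blockForm τ₂
  rw [hτ₂, det_fromBlocks_zero₂₁, IsUnit.mul_iff] at hAS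
  have hQ := isUnit_det_blockForm q₂
  rw [hq₂, det_fromBlocks_zero₂₁, det_one, one_mul] at hQ
  have hblocks := congrArg (fun g : GL (Fin (r + (m + 1))) ℝ => blockForm g.val) h
  rw [blockForm_mul_mul_mul hτ₁ hu₁ hq₁ hv₁, blockForm_mul_mul_mul hτ₂ hu₂ hq₂ hv₂] at hblocks
  obtain ⟨rfl, rfl, rfl, rfl, rfl, rfl⟩ :=
    blockProduct_inj hR₁ hR₂ hS₁ hS₂ hw₁ hw₂ hQ₁ hQ₂ hAS.1 hAS.2 hQ hblocks
  exact ⟨eq_of_blockForm_eq (hτ₁.trans hτ₂.symm), eq_of_blockForm_eq (hu₁.trans hu₂.symm),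
    eq_of_blockForm_eq (hq₁.trans hq₂.symm), eq_of_blockForm_eq (hv₁.trans hv₂.symm)⟩

def lowerRightBlock (g : GL (Fin (r + k)) ℝ) : Matrix (Fin k) (Fin k) ℝ :=
  (blockForm g.val).toBlocks₂₂

theorem continuous_lowerRightBlock : Continuous (lowerRightBlock : GL (Fin (r + k)) ℝ → _) :=
  continuous_matrix fun i j =>
    (Units.continuous_val.matrix_reindex _ _).matrix_elem (Sum.inr i) (Sum.inr j)

theorem exists_factorization_iff (g : GL (Fin (r + (m + 1))) ℝ) :
    (∃ τ ∈ Tgroup (r + (m + 1)) r, ∃ u ∈ Ugroup (r + (m + 1)) r, ∃ q ∈ Qgroup' (r + (m + 1)) r,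
      ∃ v ∈ Ubar (r + (m + 1)) r, g = τ * u * q * v) ↔
    IsUnit (lowerRightBlock g).det ∧
      IsUnit (updateCol (lowerRightBlock g) 0 (fun i => if i = 0 then 1 else 0)).det := by
  constructor
  · rintro ⟨τ, hτ, u, hu, q, hq, v, hv, rfl⟩
    obtain ⟨A, R, S, hR, hS, hτ⟩ := mem_Tgroup_iff.1 hτ
    obtain ⟨w, hw, hu⟩ := mem_Ugroup_iff.1 hu
    obtain ⟨Q, hQ, hq⟩ := mem_Qgroup'_iff.1 hq
    obtain ⟨x, hv⟩ := mem_Ubar_iff.1 hv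
    have hAS := isUnit_det_blockForm τ
    rw [hτ, det_fromBlocks_zero₂₁, IsUnit.mul_iff] at hAS
    have hQu := isUnit_det_blockForm q
    rw [hq, det_fromBlocks_zero₂₁, det_one, one_mul] at hQu
    have hD : lowerRightBlock (τ * u * q * v) = S * Q := by
      rw [lowerRightBlock, blockForm_mul_mul_mul hτ hu hq hv, blockProduct_eq_fromBlocks,
        toBlocks_fromBlocks₂₂]
    rw [hD, updateCol_mul_eq_left hS hQ, det_mul]
    exact ⟨hAS.2.mul hQu, hAS.2⟩
  · rintro ⟨hD, hSD⟩
    obtain ⟨A', B, C, D, hg⟩ := exists_eq_blockForm_symm_fromBlocks g.val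
    rw [AlgEquiv.eq_symm_apply] at hg
    have hM := isUnit_det_blockForm g
    rw [lowerRightBlock, hg, toBlocks_fromBlocks₂₂] at hD hSD
    rw [hg] at hM
    obtain ⟨A, R, w, S, Q, x, hR, hS, hw, hQ, hA, hSu, hQu, hfac⟩ :=
      exists_blockProduct_eq hM hD hSD
    obtain ⟨τ, hτ⟩ := exists_blockForm_eq (X := fromBlocks A R 0 S)
      (by rw [det_fromBlocks_zero₂₁]; exact hA.mul hSu)
    obtain ⟨u, hu⟩ := exists_blockForm_eq (X := fromBlocks 1 w 0 1) (by simp)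
    obtain ⟨q, hq⟩ := exists_blockForm_eq (X := fromBlocks 1 0 0 Q)
      (by rwa [det_fromBlocks_zero₂₁, det_one, one_mul])
    obtain ⟨v, hv⟩ := exists_blockForm_eq (X := fromBlocks 1 0 x 1) (by simp)
    refine ⟨τ, mem_Tgroup_iff.2 ⟨A, R, S, hR, hS, hτ⟩, u, mem_Ugroup_iff.2 ⟨w, hw, hu⟩,
      q, mem_Qgroup'_iff.2 ⟨Q, hQ, hq⟩, v, mem_Ubar_iff.2 ⟨x, hv⟩, eq_of_blockForm_eq ?_⟩
    rw [hg, ← hfac, blockForm_mul_mul_mul hτ hu hq hv]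

end BlockForm

/-- For `n > r ≥ 0`, the multiplication map
`(P_{r,n-r} ∩ P°_{r+1}) × U_r × Q'_{n-r} × Ū_{r,n-r} → GL_n(ℝ)` is injective and its image
is open; in particular it is an open embedding. -/
theorem multiplication_open_embedding (n r : ℕ) (hn : r < n) :
    (∀ τ₁ τ₂ u₁ u₂ q₁ q₂ v₁ v₂ : GL (Fin n) ℝ,
      τ₁ ∈ Tgroup n r → τ₂ ∈ Tgroup n r → u₁ ∈ Ugroup n r → u₂ ∈ Ugroup n r →
      q₁ ∈ Qgroup' n r → q₂ ∈ Qgroup' n r → v₁ ∈ Ubar n r → v₂ ∈ Ubar n r →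
      τ₁ * u₁ * q₁ * v₁ = τ₂ * u₂ * q₂ * v₂ →
      τ₁ = τ₂ ∧ u₁ = u₂ ∧ q₁ = q₂ ∧ v₁ = v₂) ∧
    IsOpen {g : GL (Fin n) ℝ | ∃ τ ∈ Tgroup n r, ∃ u ∈ Ugroup n r, ∃ q ∈ Qgroup' n r,
      ∃ v ∈ Ubar n r, g = τ * u * q * v} := by
  obtain ⟨m, rfl⟩ : ∃ m, n = r + (m + 1) := ⟨n - r - 1, by omega⟩
  refine ⟨fun _ _ _ _ _ _ _ _ => factorization_injective, ?_⟩
  simp_rw [exists_factorization_iff]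
  exact (Units.isOpen.preimage continuous_lowerRightBlock.matrix_det).inter
    (Units.isOpen.preimage
      ((continuous_lowerRightBlock.matrix_updateCol 0 continuous_const).matrix_det))
end
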